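/- Let T > 0 and let u, v be measurable functions on ℝ × [0,T]. Then ‖u v‖_{L^{6/5}_{x,t}} ≤ T^{3/8 + 7/18} ‖u‖_{L^∞_t L^2_x}^{3/4} ‖u‖_{L^6_{x,t}}^{1/4} ‖v‖_{L^∞_t L^2_x}^{7/9} ‖v‖_{L^8_{x,t}}^{2/9}. -/

import Mathlib

open MeasureTheory
open scoped ENNReal

/-!
Write `|uv|^{6/5} = (|u|²)^{9/20} (|v|²)^{7/15} (|u|⁶)^{1/20} (|v|⁸)^{1/30}`, four weights summing
to `1`. At each time, Hölder in `x` bounds the `x`-integrals of `|u|²` and `|v|²` by the squares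
of the `L^∞_t L²_x` norms and leaves `(∫ |u|⁶ dx)^{1/20} (∫ |v|⁸ dx)^{1/30}`; Hölder in `t`
against the constant `1`, with weight `9/20 + 7/15 = 11/12`, turns this into
`T^{11/12} ‖u‖₆^{3/10} ‖v‖₈^{4/15}`.
Taking the `5/6`-th power gives the claim, with `T^{55/72} = T^{3/8 + 7/18}`.
-/

section Holder

variable {α : Type*} [MeasurableSpace α] {μ : Measure α}

theorem lintegral_rpow_mul₃_le {f g h : α → ℝ≥0∞}
    (hf : AEMeasurable f μ) (hg : AEMeasurable g μ) (hh : AEMeasurable h μ)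
    {p q r : ℝ} (hp : 0 ≤ p) (hq : 0 ≤ q) (hr : 0 ≤ r) (hpqr : p + q + r = 1) :
    ∫⁻ a, f a ^ p * g a ^ q * h a ^ r ∂μ ≤
      (∫⁻ a, f a ∂μ) ^ p * (∫⁻ a, g a ∂μ) ^ q * (∫⁻ a, h a ∂μ) ^ r := by
  have := ENNReal.lintegral_prod_norm_pow_le (μ := μ) Finset.univ
    (f := ![f, g, h]) (p := ![p, q, r])
    (by intro i _; fin_cases i <;> assumption)
    (by simpa [Fin.sum_univ_three] using hpqr)
    (by intro i _; fin_cases i <;> assumption)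
  simpa [Fin.prod_univ_three, mul_assoc] using this

theorem lintegral_rpow_mul₄_le {f g h k : α → ℝ≥0∞}
    (hf : AEMeasurable f μ) (hg : AEMeasurable g μ) (hh : AEMeasurable h μ)
    (hk : AEMeasurable k μ) {p q r s : ℝ} (hp : 0 ≤ p) (hq : 0 ≤ q) (hr : 0 ≤ r) (hs : 0 ≤ s)
    (hpqrs : p + q + r + s = 1) :
    ∫⁻ a, f a ^ p * g a ^ q * h a ^ r * k a ^ s ∂μ ≤
      (∫⁻ a, f a ∂μ) ^ p * (∫⁻ a, g a ∂μ) ^ q * (∫⁻ a, h a ∂μ) ^ r * (∫⁻ a, k a ∂μ) ^ s := by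
  have := ENNReal.lintegral_prod_norm_pow_le (μ := μ) Finset.univ
    (f := ![f, g, h, k]) (p := ![p, q, r, s])
    (by intro i _; fin_cases i <;> assumption)
    (by simpa [Fin.sum_univ_four] using hpqrs)
    (by intro i _; fin_cases i <;> assumption)
  simpa [Fin.prod_univ_four, mul_assoc] using this

end Holder

section MixedHolder

variable {α β : Type*} [MeasurableSpace α] [MeasurableSpace β]
  {μ : Measure α} {ν : Measure β} [SFinite μ] [SFinite ν]

theorem lintegral_prod_rpow_mul₄_le_of_ae_lintegral_le {F₁ F₂ G₁ G₂ : α × β → ℝ≥0∞}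
    (hF₁ : Measurable F₁) (hF₂ : Measurable F₂) (hG₁ : Measurable G₁) (hG₂ : Measurable G₂)
    {a₁ a₂ : ℝ≥0∞} (ha₁ : ∀ᵐ t ∂ν, ∫⁻ x, F₁ (x, t) ∂μ ≤ a₁)
    (ha₂ : ∀ᵐ t ∂ν, ∫⁻ x, F₂ (x, t) ∂μ ≤ a₂)
    {p₁ p₂ q₁ q₂ : ℝ} (hp₁ : 0 ≤ p₁) (hp₂ : 0 ≤ p₂) (hq₁ : 0 ≤ q₁) (hq₂ : 0 ≤ q₂)
    (hsum : p₁ + p₂ + q₁ + q₂ = 1) :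
    ∫⁻ z, F₁ z ^ p₁ * F₂ z ^ p₂ * G₁ z ^ q₁ * G₂ z ^ q₂ ∂μ.prod ν ≤
      a₁ ^ p₁ * a₂ ^ p₂ * ν Set.univ ^ (p₁ + p₂) *
        (∫⁻ z, G₁ z ∂μ.prod ν) ^ q₁ * (∫⁻ z, G₂ z ∂μ.prod ν) ^ q₂ := by
  have slice {F : α × β → ℝ≥0∞} (hF : Measurable F) (t : β) : Measurable fun x => F (x, t) :=
    hF.comp measurable_prodMk_right
  set g₁ : β → ℝ≥0∞ := fun t => ∫⁻ x, G₁ (x, t) ∂μ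
  set g₂ : β → ℝ≥0∞ := fun t => ∫⁻ x, G₂ (x, t) ∂μ
  have hg₁ : Measurable g₁ := hG₁.lintegral_prod_left'
  have hg₂ : Measurable g₂ := hG₂.lintegral_prod_left'
  have holder_x : ∀ᵐ t ∂ν, ∫⁻ x, F₁ (x, t) ^ p₁ * F₂ (x, t) ^ p₂ * G₁ (x, t) ^ q₁ *
      G₂ (x, t) ^ q₂ ∂μ ≤ a₁ ^ p₁ * a₂ ^ p₂ * (g₁ t ^ q₁ * g₂ t ^ q₂) := by
    filter_upwards [ha₁, ha₂] with t ht₁ ht₂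
    calc _ ≤ (∫⁻ x, F₁ (x, t) ∂μ) ^ p₁ * (∫⁻ x, F₂ (x, t) ∂μ) ^ p₂ * g₁ t ^ q₁ * g₂ t ^ q₂ :=
          lintegral_rpow_mul₄_le (slice hF₁ t).aemeasurable (slice hF₂ t).aemeasurable
            (slice hG₁ t).aemeasurable (slice hG₂ t).aemeasurable hp₁ hp₂ hq₁ hq₂ hsum
      _ ≤ a₁ ^ p₁ * a₂ ^ p₂ * g₁ t ^ q₁ * g₂ t ^ q₂ := by gcongr
      _ = _ := by ring
  have holder_t : ∫⁻ t, g₁ t ^ q₁ * g₂ t ^ q₂ ∂ν ≤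
      ν Set.univ ^ (p₁ + p₂) * (∫⁻ t, g₁ t ∂ν) ^ q₁ * (∫⁻ t, g₂ t ∂ν) ^ q₂ := by
    simpa using lintegral_rpow_mul₃_le (μ := ν) (f := fun _ => 1) aemeasurable_const
      hg₁.aemeasurable hg₂.aemeasurable (add_nonneg hp₁ hp₂) hq₁ hq₂ (by linarith)
  calc _ = ∫⁻ t, ∫⁻ x, F₁ (x, t) ^ p₁ * F₂ (x, t) ^ p₂ * G₁ (x, t) ^ q₁ *
        G₂ (x, t) ^ q₂ ∂μ ∂ν :=
        lintegral_prod_symm' _ ((((hF₁.pow_const _).mul (hF₂.pow_const _)).mul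
          (hG₁.pow_const _)).mul (hG₂.pow_const _))
    _ ≤ ∫⁻ t, a₁ ^ p₁ * a₂ ^ p₂ * (g₁ t ^ q₁ * g₂ t ^ q₂) ∂ν := lintegral_mono_ae holder_x
    _ = a₁ ^ p₁ * a₂ ^ p₂ * ∫⁻ t, g₁ t ^ q₁ * g₂ t ^ q₂ ∂ν :=
        lintegral_const_mul _ ((hg₁.pow_const _).mul (hg₂.pow_const _))
    _ ≤ a₁ ^ p₁ * a₂ ^ p₂ * (ν Set.univ ^ (p₁ + p₂) * (∫⁻ t, g₁ t ∂ν) ^ q₁ *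
          (∫⁻ t, g₂ t ∂ν) ^ q₂) := by gcongr
    _ = _ := by
        rw [lintegral_prod_symm' _ hG₁, lintegral_prod_symm' _ hG₂]
        ring

end MixedHolder

theorem ae_restrict_lintegral_enorm_rpow_le_biSup {α β E : Type*} [MeasurableSpace α]
    [MeasurableSpace β] [NormedAddCommGroup E] {μ : Measure α} {ν : Measure β}
    (f : α → β → E) {s : Set β} (hs : MeasurableSet s) {p : NNReal} (hp : p ≠ 0) :
    ∀ᵐ t ∂ν.restrict s, ∫⁻ x, ‖f x t‖ₑ ^ (p : ℝ) ∂μ ≤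
      (⨆ t ∈ s, eLpNorm (fun x => f x t) p μ) ^ (p : ℝ) := by
  filter_upwards [ae_restrict_mem hs] with t ht
  rw [← eLpNorm_nnreal_pow_eq_lintegral hp]
  gcongr
  exact le_biSup (fun t => eLpNorm (fun x => f x t) p μ) ht

theorem mul_rpow_six_fifths_eq (a b : ℝ≥0∞) :
    (a * b) ^ (6 / 5 : ℝ) = (a ^ (2 : ℝ)) ^ (9 / 20 : ℝ) * (b ^ (2 : ℝ)) ^ (7 / 15 : ℝ) *
      (a ^ (6 : ℝ)) ^ (1 / 20 : ℝ) * (b ^ (8 : ℝ)) ^ (1 / 30 : ℝ) := by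
  calc (a * b) ^ (6 / 5 : ℝ) = a ^ (9 / 10 + 3 / 10 : ℝ) * b ^ (14 / 15 + 4 / 15 : ℝ) := by
        rw [ENNReal.mul_rpow_of_nonneg _ _ (by norm_num)]; norm_num
    _ = _ := by
        rw [ENNReal.rpow_add_of_nonneg _ _ (by norm_num) (by norm_num),
          ENNReal.rpow_add_of_nonneg _ _ (by norm_num) (by norm_num)]
        simp only [← ENNReal.rpow_mul]
        norm_num
        ring

/-- Hölder/interpolation estimate (4.2) for the coupling term:
‖uv‖_{L^{6/5}_{x,t}} ≤ T^{3/8+7/18} ‖u‖_{L^∞_t L²_x}^{3/4} ‖u‖_{L⁶_{x,t}}^{1/4}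
‖v‖_{L^∞_t L²_x}^{7/9} ‖v‖_{L⁸_{x,t}}^{2/9} on ℝ × [0,T]. -/
theorem stmt_14 (T : ℝ) (hT : 0 < T) (u : ℝ → ℝ → ℂ) (v : ℝ → ℝ → ℝ)
    (hu : Measurable (Function.uncurry u)) (hv : Measurable (Function.uncurry v)) :
    eLpNorm (fun q : ℝ × ℝ => u q.1 q.2 * ((v q.1 q.2 : ℝ) : ℂ)) ((6 : ℝ≥0∞) / 5)
        ((volume : Measure ℝ).prod ((volume : Measure ℝ).restrict (Set.Icc 0 T))) ≤
      ENNReal.ofReal (T ^ ((3 : ℝ) / 8 + (7 : ℝ) / 18)) *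
        (⨆ t ∈ Set.Icc (0 : ℝ) T,
          eLpNorm (fun x : ℝ => u x t) 2 (volume : Measure ℝ)) ^ ((3 : ℝ) / 4) *
        (eLpNorm (fun q : ℝ × ℝ => u q.1 q.2) 6
          ((volume : Measure ℝ).prod ((volume : Measure ℝ).restrict (Set.Icc 0 T))))
            ^ ((1 : ℝ) / 4) *
        (⨆ t ∈ Set.Icc (0 : ℝ) T,
          eLpNorm (fun x : ℝ => v x t) 2 (volume : Measure ℝ)) ^ ((7 : ℝ) / 9) *
        (eLpNorm (fun q : ℝ × ℝ => v q.1 q.2) 8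
          ((volume : Measure ℝ).prod ((volume : Measure ℝ).restrict (Set.Icc 0 T))))
            ^ ((2 : ℝ) / 9) := by
  have holder := lintegral_prod_rpow_mul₄_le_of_ae_lintegral_le (μ := volume)
    (ν := (volume : Measure ℝ).restrict (Set.Icc 0 T))
    (F₁ := fun q : ℝ × ℝ => ‖u q.1 q.2‖ₑ ^ (2 : ℝ)) (F₂ := fun q => ‖v q.1 q.2‖ₑ ^ (2 : ℝ))
    (G₁ := fun q => ‖u q.1 q.2‖ₑ ^ (6 : ℝ)) (G₂ := fun q => ‖v q.1 q.2‖ₑ ^ (8 : ℝ))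
    (hu.enorm.pow_const _) (hv.enorm.pow_const _) (hu.enorm.pow_const _) (hv.enorm.pow_const _)
    (by simpa only [NNReal.coe_ofNat, ENNReal.coe_ofNat] using
      ae_restrict_lintegral_enorm_rpow_le_biSup u measurableSet_Icc (p := 2) two_ne_zero)
    (by simpa only [NNReal.coe_ofNat, ENNReal.coe_ofNat] using
      ae_restrict_lintegral_enorm_rpow_le_biSup v measurableSet_Icc (p := 2) two_ne_zero)
    (p₁ := 9 / 20) (p₂ := 7 / 15) (q₁ := 1 / 20) (q₂ := 1 / 30)
    (by norm_num) (by norm_num) (by norm_num) (by norm_num) (by norm_num)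
  set μ := (volume : Measure ℝ).prod ((volume : Measure ℝ).restrict (Set.Icc 0 T))
  have norm_u : ∫⁻ q, ‖u q.1 q.2‖ₑ ^ (6 : ℝ) ∂μ =
      eLpNorm (fun q : ℝ × ℝ => u q.1 q.2) 6 μ ^ (6 : ℝ) := by
    simpa using (eLpNorm_nnreal_pow_eq_lintegral (f := fun q : ℝ × ℝ => u q.1 q.2) (μ := μ)
      (p := 6) (by norm_num)).symm
  have norm_v : ∫⁻ q, ‖v q.1 q.2‖ₑ ^ (8 : ℝ) ∂μ =
      eLpNorm (fun q : ℝ × ℝ => v q.1 q.2) 8 μ ^ (8 : ℝ) := by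
    simpa using (eLpNorm_nnreal_pow_eq_lintegral (f := fun q : ℝ × ℝ => v q.1 q.2) (μ := μ)
      (p := 8) (by norm_num)).symm
  have volume_Icc : volume.restrict (Set.Icc (0 : ℝ) T) Set.univ = ENNReal.ofReal T := by
    rw [Measure.restrict_apply_univ, Real.volume_Icc, sub_zero]
  rw [← ENNReal.rpow_le_rpow_iff (z := 6 / 5) (by norm_num)]
  calc _ = ∫⁻ q, (‖u q.1 q.2‖ₑ * ‖v q.1 q.2‖ₑ) ^ (6 / 5 : ℝ) ∂μ := by
        simpa [enorm_mul, enorm_eq_nnnorm, Complex.nnnorm_real] using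
          eLpNorm_nnreal_pow_eq_lintegral (p := 6 / 5) (μ := μ) (by norm_num)
            (f := fun q : ℝ × ℝ => u q.1 q.2 * ((v q.1 q.2 : ℝ) : ℂ))
    _ = _ := by simp_rw [mul_rpow_six_fifths_eq]
    _ ≤ _ := holder
    _ = _ := by
        rw [norm_u, norm_v, volume_Icc, ← ENNReal.ofReal_rpow_of_pos hT]
        simp only [ENNReal.mul_rpow_of_nonneg _ _ (by norm_num : (0 : ℝ) ≤ 6 / 5),
          ← ENNReal.rpow_mul]
        norm_num
        ring
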